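/- arXiv:2203.05481 — 2 statements merged into one kernel-verified Lean document; each statement's English description precedes it below -/
import Mathlib

section
/- If an algorithm A is (ε, δ)-probabilistically differentially private, then A is (ε, δ)-differentially private. -/
open MeasureTheory Real

/-- pDP implies DP: if `μ` (the law of `A x`) and `ν` (the law of `A x'`) are probability
measures with `μ ≪ ν`, and the privacy loss `log (dμ/dν)` exceeds `ε` in absolute value with
`μ`-probability at most `δ`, then `μ G ≤ e^ε ν G + δ` for every measurable `G`. -/
theorem pdp_implies_dp {Y : Type*} [MeasurableSpace Y] (μ ν : Measure Y)
    [IsProbabilityMeasure μ] [IsProbabilityMeasure ν] (hac : μ ≪ ν)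
    (ε δ : ℝ) (hε : 0 ≤ ε) (hδ : 0 ≤ δ)
    (hpdp : μ {y | ε < |Real.log ((μ.rnDeriv ν y).toReal)|} ≤ ENNReal.ofReal δ) :
    ∀ G : Set Y, MeasurableSet G →
      μ G ≤ ENNReal.ofReal (Real.exp ε) * ν G + ENNReal.ofReal δ := by
  intro G hG
  set f := μ.rnDeriv ν with hf
  have hfm : Measurable f := Measure.measurable_rnDeriv μ ν
  set B : Set Y := {y | ε < |Real.log ((f y).toReal)|} with hB
  have hBad : MeasurableSet B :=
    measurableSet_lt measurable_const (hfm.ennreal_toReal.log.abs)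
  have h1 : μ G ≤ μ (G \ B) + μ B := by
    calc μ G ≤ μ ((G \ B) ∪ B) := by
          apply measure_mono
          intro y hy
          by_cases h : y ∈ B
          · exact Or.inr h
          · exact Or.inl ⟨hy, h⟩
    _ ≤ μ (G \ B) + μ B := measure_union_le _ _
  have h2 : μ (G \ B) = ∫⁻ y in G \ B, f y ∂ν :=
    (Measure.setLIntegral_rnDeriv hac _).symm
  have hae : ∀ᵐ y ∂(ν.restrict (G \ B)), f y ≤ ENNReal.ofReal (Real.exp ε) := by
    filter_upwards [ae_restrict_of_ae (Measure.rnDeriv_lt_top μ ν),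
      ae_restrict_mem (hG.diff hBad)] with y hlt hy
    have hyB : ¬ ε < |Real.log ((f y).toReal)| := hy.2
    by_cases h0 : (f y).toReal = 0
    · rcases ENNReal.toReal_eq_zero_iff _ |>.mp h0 with h | h
      · simp [h]
      · exact absurd h hlt.ne
    · have ht : 0 < (f y).toReal := lt_of_le_of_ne ENNReal.toReal_nonneg (Ne.symm h0)
      have hlog : Real.log ((f y).toReal) ≤ ε := (abs_le.mp (not_lt.mp hyB)).2
      have hle : (f y).toReal ≤ Real.exp ε := by
        have := Real.exp_le_exp.mpr hlog
        rwa [Real.exp_log ht] at this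
      calc f y = ENNReal.ofReal ((f y).toReal) := (ENNReal.ofReal_toReal hlt.ne).symm
        _ ≤ ENNReal.ofReal (Real.exp ε) := ENNReal.ofReal_le_ofReal hle
  have h3 : ∫⁻ y in G \ B, f y ∂ν ≤ ENNReal.ofReal (Real.exp ε) * ν (G \ B) := by
    calc ∫⁻ y in G \ B, f y ∂ν ≤ ∫⁻ _ in G \ B, ENNReal.ofReal (Real.exp ε) ∂ν :=
          lintegral_mono_ae hae
      _ = ENNReal.ofReal (Real.exp ε) * ν (G \ B) := by
          rw [setLIntegral_const]
  have h4 : μ B ≤ ENNReal.ofReal δ := hpdp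
  calc μ G ≤ μ (G \ B) + μ B := h1
    _ ≤ ENNReal.ofReal (Real.exp ε) * ν (G \ B) + ENNReal.ofReal δ := by
        rw [h2]; exact add_le_add h3 h4
    _ ≤ ENNReal.ofReal (Real.exp ε) * ν G + ENNReal.ofReal δ := by
        gcongr
        exact Set.diff_subset
end

section
/- Reduction to randomized response (nonadaptive case): if μ and ν are probability measures on Y such that μ(G) ≤ e^ε ν(G) + δ and ν(G) ≤ e^ε μ(G) + δ for all measurable G, then there exists a Markov kernel κ from the 4-point space {0,1,⊤,⊥} to Y such that μ = κ∗(law of R(0)) and ν = κ∗(law of R(1)), where R is (ε, δ)-randomized response. -/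
open MeasureTheory ProbabilityTheory Real

/-- The four possible outputs of randomized response. -/
inductive RROut : Type
  | zero
  | one
  | top
  | bot
  deriving DecidableEq

instance : MeasurableSpace RROut := ⊤

/-- The law of `(ε, δ)`-randomized response on input bit `b`. -/
noncomputable def rrLaw (ε δ : ℝ) (b : Bool) : Measure RROut :=
  ENNReal.ofReal ((1 - δ) * Real.exp ε / (1 + Real.exp ε)) •
      Measure.dirac (if b then RROut.one else RROut.zero)
    + ENNReal.ofReal ((1 - δ) / (1 + Real.exp ε)) •
      Measure.dirac (if b then RROut.zero else RROut.one)
    + ENNReal.ofReal δ • Measure.dirac (if b then RROut.top else RROut.bot)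

/-! Let `f, g` be the densities of `μ, ν` with respect to `μ + ν` and `c = e^ε`. The privacy
hypotheses say exactly that `∫ (f - c g)⁺ ≤ δ` and `∫ (g - c f)⁺ ≤ δ`, so `min f (c g)` and
`min g (c f)` have mass at least `1 - δ`. From them we carve sub-densities `m₀ ≤ f`, `m₁ ≤ g` of
mass exactly `1 - δ` with `c⁻¹ m₀ ≤ m₁ ≤ c m₀`. The remainders `(μ - m₀) / δ` and `(ν - m₁) / δ`
are the laws at `⊥` and `⊤`, and the laws `P₀, P₁` at `0, 1` solve the linear system
`p P₀ + q P₁ = m₀`, `p P₁ + q P₀ = m₁` with `p = c q`, `p + q = 1 - δ`; its solution is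
nonnegative precisely because `m₀` and `m₁` are within a factor `c` of each other. -/

open scoped ENNReal NNReal

namespace ENNReal

lemma min_le_mul_min {a b c : ℝ≥0∞} (hc : 1 ≤ c) : min b (c * a) ≤ c * min a (c * b) := by
  rcases le_total a (c * b) with h | h
  · rw [min_eq_left h]
    exact min_le_right _ _
  · rw [min_eq_right h]
    calc min b (c * a) ≤ b := min_le_left _ _
      _ ≤ c * b := le_mul_of_one_le_left' hc
      _ ≤ c * (c * b) := le_mul_of_one_le_left' hc

lemma mul_tsub_add_mul_tsub {p q x y : ℝ≥0∞} (hp : p ≠ ∞) (hq : q ≠ ∞) (hx : x ≠ ∞)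
    (hy : y ≠ ∞) (hqp : q ≤ p) (hyx : q * y ≤ p * x) (hxy : q * x ≤ p * y) :
    p * (p * x - q * y) + q * (p * y - q * x) = (p - q) * (p + q) * x := by
  lift p to ℝ≥0 using hp
  lift q to ℝ≥0 using hq
  lift x to ℝ≥0 using hx
  lift y to ℝ≥0 using hy
  norm_cast at *
  apply NNReal.eq
  push_cast [NNReal.coe_sub hqp, NNReal.coe_sub hyx, NNReal.coe_sub hxy]
  ring

end ENNReal

namespace MeasureTheory

variable {Y : Type*} [MeasurableSpace Y] {σ : Measure Y}

lemma lintegral_tsub_le_of_forall_setLIntegral_le {f g : Y → ℝ≥0∞} {δ : ℝ≥0∞}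
    (hf : Measurable f) (hg : Measurable g) (hg_fin : ∫⁻ y, g y ∂σ ≠ ∞)
    (h : ∀ s, MeasurableSet s → ∫⁻ y in s, f y ∂σ ≤ ∫⁻ y in s, g y ∂σ + δ) :
    ∫⁻ y, f y - g y ∂σ ≤ δ := by
  set S := {y | g y < f y}
  have hS : MeasurableSet S := measurableSet_lt hg hf
  have h_supp : Function.support (fun y ↦ f y - g y) ⊆ S := fun y hy ↦
    tsub_pos_iff_lt.1 (pos_iff_ne_zero.2 hy)
  have h_split : ∫⁻ y in S, g y ∂σ + ∫⁻ y in S, f y - g y ∂σ = ∫⁻ y in S, f y ∂σ := by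
    rw [← lintegral_add_left hg]
    exact setLIntegral_congr_fun hS fun y hy ↦ add_tsub_cancel_of_le (le_of_lt hy)
  rw [← setLIntegral_eq_of_support_subset h_supp]
  exact (ENNReal.add_le_add_iff_left (ne_top_of_le_ne_top hg_fin (setLIntegral_le_lintegral S g))).1
    (h_split.trans_le (h S hS))

lemma lintegral_min_add_lintegral_tsub {f g : Y → ℝ≥0∞} (hf : Measurable f) (hg : Measurable g) :
    ∫⁻ y, min (f y) (g y) ∂σ + ∫⁻ y, f y - g y ∂σ = ∫⁻ y, f y ∂σ := by
  rw [← lintegral_add_left (hf.min hg)]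
  congr with y
  rw [add_comm, tsub_add_min]

lemma exists_between_lintegral_eq {L W : Y → ℝ≥0∞} (hL : Measurable L) (hW : Measurable W)
    (hLW : L ≤ W) {a : ℝ≥0∞} (hLa : ∫⁻ y, L y ∂σ ≤ a) (haW : a ≤ ∫⁻ y, W y ∂σ)
    (hW_fin : ∫⁻ y, W y ∂σ ≠ ∞) :
    ∃ m : Y → ℝ≥0∞, Measurable m ∧ L ≤ m ∧ m ≤ W ∧ ∫⁻ y, m y ∂σ = a := by
  set D := ∫⁻ y, W y ∂σ - ∫⁻ y, L y ∂σ
  have hL_fin : ∫⁻ y, L y ∂σ ≠ ∞ := ne_top_of_le_ne_top hW_fin (lintegral_mono hLW)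
  have hD : ∫⁻ y, W y - L y ∂σ = D := lintegral_sub hL hL_fin (ae_of_all _ hLW)
  set t := (a - ∫⁻ y, L y ∂σ) / D
  have ht : t ≤ 1 := ENNReal.div_le_of_le_mul (by rw [one_mul]; exact tsub_le_tsub_right haW _)
  have htD : t * D = a - ∫⁻ y, L y ∂σ := by
    rcases eq_or_ne D 0 with hD0 | hD0
    · rw [hD0, mul_zero, eq_comm, ← nonpos_iff_eq_zero, ← hD0]
      exact tsub_le_tsub_right haW _
    · exact ENNReal.div_mul_cancel hD0 (ne_top_of_le_ne_top hW_fin tsub_le_self)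
  refine ⟨fun y ↦ L y + t * (W y - L y), hL.add ((hW.sub hL).const_mul t), fun y ↦ le_self_add,
    fun y ↦ ?_, ?_⟩
  · calc L y + t * (W y - L y) ≤ L y + (W y - L y) := by gcongr; exact mul_le_of_le_one_left' ht
      _ = W y := add_tsub_cancel_of_le (hLW y)
  · rw [lintegral_add_left hL, lintegral_const_mul t (f := fun y ↦ W y - L y) (hW.sub hL), hD,
      htD, add_tsub_cancel_of_le hLa]

lemma exists_comparable_le_of_le_lintegral_min {c a : ℝ≥0∞} (hc : 1 ≤ c) (hc_top : c ≠ ∞)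
    {g m₀ : Y → ℝ≥0∞} (hg : Measurable g) (hm₀ : Measurable m₀) (hg_fin : ∫⁻ y, g y ∂σ ≠ ∞)
    (hm₀g : m₀ ≤ c • g) (hm₀_int : ∫⁻ y, m₀ y ∂σ = a)
    (ha : a ≤ ∫⁻ y, min (g y) (c * m₀ y) ∂σ) :
    ∃ m₁ : Y → ℝ≥0∞, Measurable m₁ ∧ m₁ ≤ g ∧ m₁ ≤ c • m₀ ∧ m₀ ≤ c • m₁ ∧
      ∫⁻ y, m₁ y ∂σ = a := by
  have hc_inv : c⁻¹ ≤ 1 := ENNReal.inv_le_one.2 hc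
  have hc_inv_mul {x y : ℝ≥0∞} : c⁻¹ * x ≤ y ↔ x ≤ c * y :=
    ENNReal.inv_mul_le_iff (zero_lt_one.trans_le hc).ne' hc_top
  obtain ⟨m₁, hm₁, hm₀m₁, hm₁_le, hm₁_int⟩ := exists_between_lintegral_eq
    (L := fun y ↦ c⁻¹ * m₀ y) (hm₀.const_mul _) (hg.min (hm₀.const_mul c))
    (fun y ↦ le_min (hc_inv_mul.2 (hm₀g y))
      ((mul_le_of_le_one_left' hc_inv).trans (le_mul_of_one_le_left' hc)))
    (by rw [lintegral_const_mul _ hm₀, hm₀_int]; exact mul_le_of_le_one_left' hc_inv) ha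
    (ne_top_of_le_ne_top hg_fin (lintegral_mono fun y ↦ min_le_left _ _))
  exact ⟨m₁, hm₁, fun y ↦ (hm₁_le y).trans (min_le_left _ _),
    fun y ↦ (hm₁_le y).trans (min_le_right _ _), fun y ↦ hc_inv_mul.1 (hm₀m₁ y), hm₁_int⟩

lemma exists_comparable_subdensities_of_le {c δ : ℝ≥0∞} (hc : 1 ≤ c) (hc_top : c ≠ ∞)
    (hδ : δ < 1) {f g : Y → ℝ≥0∞} (hf : Measurable f) (hg : Measurable g)
    (hf_one : ∫⁻ y, f y ∂σ = 1) (hg_one : ∫⁻ y, g y ∂σ = 1)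
    (hfg : ∫⁻ y, f y - c * g y ∂σ ≤ δ)
    (hgf : ∫⁻ y, g y - c * f y ∂σ ≤ ∫⁻ y, f y - c * g y ∂σ) :
    ∃ m₀ m₁ : Y → ℝ≥0∞, Measurable m₀ ∧ Measurable m₁ ∧ m₀ ≤ f ∧ m₁ ≤ g ∧
      m₁ ≤ c • m₀ ∧ m₀ ≤ c • m₁ ∧ ∫⁻ y, m₀ y ∂σ = 1 - δ ∧ ∫⁻ y, m₁ y ∂σ = 1 - δ := by
  set A := ∫⁻ y, f y - c * g y ∂σ
  set B := ∫⁻ y, g y - c * f y ∂σ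
  have hA_lt : A < 1 := hfg.trans_lt hδ
  have hu : ∫⁻ y, min (f y) (c * g y) ∂σ = 1 - A := ENNReal.eq_sub_of_add_eq hA_lt.ne_top
    ((lintegral_min_add_lintegral_tsub hf (hg.const_mul c)).trans hf_one)
  have hv : ∫⁻ y, min (g y) (c * f y) ∂σ = 1 - B :=
    ENNReal.eq_sub_of_add_eq (hgf.trans_lt hA_lt).ne_top
      ((lintegral_min_add_lintegral_tsub hg (hf.const_mul c)).trans hg_one)
  set l := (1 - δ) / (1 - A)
  have hl : l ≤ 1 := ENNReal.div_le_of_le_mul (by rw [one_mul]; exact tsub_le_tsub_left hfg 1)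
  have hl_mul : l * (1 - A) = 1 - δ := ENNReal.div_mul_cancel (tsub_pos_of_lt hA_lt).ne'
    (ne_top_of_le_ne_top ENNReal.one_ne_top tsub_le_self)
  set m₀ := fun y ↦ l * min (f y) (c * g y)
  have hm₀ : Measurable m₀ := (hf.min (hg.const_mul c)).const_mul l
  have hm₀_le (y : Y) : m₀ y ≤ min (f y) (c * g y) := mul_le_of_le_one_left' hl
  have hm₀_int : ∫⁻ y, m₀ y ∂σ = 1 - δ := by
    rw [lintegral_const_mul _ (hf.min (hg.const_mul c)), hu, hl_mul]
  -- This is why `m₀` scales `min f (c g)` down by `l` instead of truncating it.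
  have h_min (y : Y) : l * min (g y) (c * f y) ≤ min (g y) (c * m₀ y) :=
    le_min ((mul_le_of_le_one_left' hl).trans (min_le_left _ _))
      ((mul_le_mul_right (ENNReal.min_le_mul_min hc) l).trans_eq (mul_left_comm _ _ _))
  have h_mass : 1 - δ ≤ ∫⁻ y, min (g y) (c * m₀ y) ∂σ :=
    calc 1 - δ = l * (1 - A) := hl_mul.symm
      _ ≤ l * (1 - B) := by gcongr
      _ = ∫⁻ y, l * min (g y) (c * f y) ∂σ := by
        rw [lintegral_const_mul _ (hg.min (hf.const_mul c)), hv]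
      _ ≤ ∫⁻ y, min (g y) (c * m₀ y) ∂σ := lintegral_mono h_min
  obtain ⟨m₁, hm₁, hm₁g, hm₁m₀, hm₀m₁, hm₁_int⟩ := exists_comparable_le_of_le_lintegral_min hc
    hc_top hg hm₀ (hg_one ▸ ENNReal.one_ne_top) (fun y ↦ (hm₀_le y).trans (min_le_right _ _))
    hm₀_int h_mass
  exact ⟨m₀, m₁, hm₀, hm₁, fun y ↦ (hm₀_le y).trans (min_le_left _ _), hm₁g, hm₁m₀, hm₀m₁,
    hm₀_int, hm₁_int⟩

lemma exists_comparable_subdensities {c δ : ℝ≥0∞} (hc : 1 ≤ c) (hc_top : c ≠ ∞) (hδ : δ < 1)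
    {f g : Y → ℝ≥0∞} (hf : Measurable f) (hg : Measurable g)
    (hf_one : ∫⁻ y, f y ∂σ = 1) (hg_one : ∫⁻ y, g y ∂σ = 1)
    (hfg : ∫⁻ y, f y - c * g y ∂σ ≤ δ) (hgf : ∫⁻ y, g y - c * f y ∂σ ≤ δ) :
    ∃ m₀ m₁ : Y → ℝ≥0∞, Measurable m₀ ∧ Measurable m₁ ∧ m₀ ≤ f ∧ m₁ ≤ g ∧
      m₁ ≤ c • m₀ ∧ m₀ ≤ c • m₁ ∧ ∫⁻ y, m₀ y ∂σ = 1 - δ ∧ ∫⁻ y, m₁ y ∂σ = 1 - δ := by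
  rcases le_total (∫⁻ y, g y - c * f y ∂σ) (∫⁻ y, f y - c * g y ∂σ) with h | h
  · exact exists_comparable_subdensities_of_le hc hc_top hδ hf hg hf_one hg_one hfg h
  · obtain ⟨m₁, m₀, hm₁, hm₀, hm₁g, hm₀f, hm₀m₁, hm₁m₀, hm₁_int, hm₀_int⟩ :=
      exists_comparable_subdensities_of_le hc hc_top hδ hg hf hg_one hf_one hgf h
    exact ⟨m₀, m₁, hm₀, hm₁, hm₀f, hm₁g, hm₁m₀, hm₀m₁, hm₀_int, hm₁_int⟩

lemma exists_comparable_submeasures {μ ν : Measure Y} [IsProbabilityMeasure μ]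
    [IsProbabilityMeasure ν] {c δ : ℝ≥0∞} (hc : 1 ≤ c) (hc_top : c ≠ ∞) (hδ : δ < 1)
    (hμν : ∀ s, MeasurableSet s → μ s ≤ c * ν s + δ)
    (hνμ : ∀ s, MeasurableSet s → ν s ≤ c * μ s + δ) :
    ∃ m₀ m₁ : Measure Y, m₀ ≤ μ ∧ m₁ ≤ ν ∧ m₁ ≤ c • m₀ ∧ m₀ ≤ c • m₁ ∧
      m₀ Set.univ = 1 - δ ∧ m₁ Set.univ = 1 - δ := by
  set σ := μ + ν
  have hμσ : μ ≪ σ := Measure.absolutelyContinuous_of_le (Measure.le_add_right le_rfl)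
  have hνσ : ν ≪ σ := Measure.absolutelyContinuous_of_le (Measure.le_add_left le_rfl)
  set f := μ.rnDeriv σ
  set g := ν.rnDeriv σ
  have hf : Measurable f := Measure.measurable_rnDeriv μ σ
  have hg : Measurable g := Measure.measurable_rnDeriv ν σ
  have hf_set (s : Set Y) : ∫⁻ y in s, f y ∂σ = μ s := Measure.setLIntegral_rnDeriv hμσ s
  have hg_set (s : Set Y) : ∫⁻ y in s, g y ∂σ = ν s := Measure.setLIntegral_rnDeriv hνσ s
  have hf_one : ∫⁻ y, f y ∂σ = 1 := by rw [← setLIntegral_univ, hf_set, measure_univ]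
  have hg_one : ∫⁻ y, g y ∂σ = 1 := by rw [← setLIntegral_univ, hg_set, measure_univ]
  have hfg : ∫⁻ y, f y - c * g y ∂σ ≤ δ := by
    refine lintegral_tsub_le_of_forall_setLIntegral_le hf (hg.const_mul c) ?_ fun s hs ↦ ?_
    · rwa [lintegral_const_mul _ hg, hg_one, mul_one]
    · rw [lintegral_const_mul _ hg, hf_set, hg_set]
      exact hμν s hs
  have hgf : ∫⁻ y, g y - c * f y ∂σ ≤ δ := by
    refine lintegral_tsub_le_of_forall_setLIntegral_le hg (hf.const_mul c) ?_ fun s hs ↦ ?_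
    · rwa [lintegral_const_mul _ hf, hf_one, mul_one]
    · rw [lintegral_const_mul _ hf, hf_set, hg_set]
      exact hνμ s hs
  obtain ⟨m₀, m₁, hm₀, hm₁, hm₀f, hm₁g, hm₁m₀, hm₀m₁, hm₀_int, hm₁_int⟩ :=
    exists_comparable_subdensities hc hc_top hδ hf hg hf_one hg_one hfg hgf
  refine ⟨σ.withDensity m₀, σ.withDensity m₁, ?_, ?_, ?_, ?_, ?_, ?_⟩
  · exact (withDensity_mono (ae_of_all _ hm₀f)).trans_eq (Measure.withDensity_rnDeriv_eq μ σ hμσ)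
  · exact (withDensity_mono (ae_of_all _ hm₁g)).trans_eq (Measure.withDensity_rnDeriv_eq ν σ hνσ)
  · exact (withDensity_mono (ae_of_all _ hm₁m₀)).trans_eq (withDensity_smul c hm₀)
  · exact (withDensity_mono (ae_of_all _ hm₀m₁)).trans_eq (withDensity_smul c hm₁)
  · rw [withDensity_apply _ MeasurableSet.univ, setLIntegral_univ, hm₀_int]
  · rw [withDensity_apply _ MeasurableSet.univ, setLIntegral_univ, hm₁_int]

lemma exists_isProbabilityMeasure_eq_add_smul {μ m : Measure Y} [IsProbabilityMeasure μ]
    (hmμ : m ≤ μ) {δ : ℝ≥0∞} (hδ : δ ≤ 1) (hm : m Set.univ = 1 - δ) :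
    ∃ P : Measure Y, IsProbabilityMeasure P ∧ μ = m + δ • P := by
  have := isFiniteMeasure_of_le μ hmμ
  rcases eq_or_ne δ 0 with rfl | hδ0
  · refine ⟨μ, inferInstance, ?_⟩
    rw [zero_smul, add_zero]
    exact (Measure.eq_of_le_of_measure_univ_eq hmμ (by rw [hm, measure_univ, tsub_zero])).symm
  · have hδ_top : δ ≠ ∞ := ne_top_of_le_ne_top ENNReal.one_ne_top hδ
    refine ⟨δ⁻¹ • (μ - m), ⟨?_⟩, ?_⟩
    · rw [Measure.smul_apply, Measure.sub_apply MeasurableSet.univ hmμ, hm, measure_univ,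
        ENNReal.sub_sub_cancel ENNReal.one_ne_top hδ, smul_eq_mul,
        ENNReal.inv_mul_cancel hδ0 hδ_top]
    · rw [smul_smul, ENNReal.mul_inv_cancel hδ0 hδ_top, one_smul, add_comm,
        Measure.sub_add_cancel_of_le hmμ]

lemma exists_isProbabilityMeasure_eq_smul_add_smul_of_lt {p q : ℝ≥0∞} (hp : p ≠ ∞)
    (hqp : q < p) {m₀ m₁ : Measure Y} (hm₀ : m₀ Set.univ = p + q)
    (hm₁ : m₁ Set.univ = p + q) (h₁₀ : q • m₁ ≤ p • m₀) (h₀₁ : q • m₀ ≤ p • m₁) :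
    ∃ P₀ P₁ : Measure Y, IsProbabilityMeasure P₀ ∧ IsProbabilityMeasure P₁ ∧
      m₀ = p • P₀ + q • P₁ ∧ m₁ = p • P₁ + q • P₀ := by
  have hq : q ≠ ∞ := ne_top_of_le_ne_top hp hqp.le
  have hpq : p + q ≠ 0 := ((pos_of_gt hqp).trans_le le_self_add).ne'
  have hpq_top : p + q ≠ ∞ := ENNReal.add_ne_top.2 ⟨hp, hq⟩
  have h_fin {a : Measure Y} (ha : a Set.univ = p + q) : IsFiniteMeasure a :=
    ⟨ha ▸ hpq_top.lt_top⟩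
  -- the determinant `p² - q²` of the system
  set r := (p - q) * (p + q)
  have hr0 : r ≠ 0 := mul_ne_zero (tsub_pos_of_lt hqp).ne' hpq
  have hr_top : r ≠ ∞ := ENNReal.mul_ne_top (ne_top_of_le_ne_top hp tsub_le_self) hpq_top
  have h_apply {a b : Measure Y} (hb : b Set.univ = p + q) (hab : q • b ≤ p • a) (s : Set Y)
      (hs : MeasurableSet s) : (r⁻¹ • (p • a - q • b)) s = r⁻¹ * (p * a s - q * b s) := by
    have := h_fin hb
    have := b.smul_finite hq
    rw [Measure.smul_apply, Measure.sub_apply hs hab]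
    rfl
  have h_solve {a b : Measure Y} (ha : a Set.univ = p + q) (hb : b Set.univ = p + q)
      (hab : q • b ≤ p • a) (hba : q • a ≤ p • b) :
      a = p • r⁻¹ • (p • a - q • b) + q • r⁻¹ • (p • b - q • a) := by
    have := h_fin ha
    have := h_fin hb
    ext s hs
    rw [Measure.add_apply, Measure.smul_apply p, Measure.smul_apply q, h_apply hb hab s hs,
      h_apply ha hba s hs, smul_eq_mul, smul_eq_mul, mul_left_comm p, mul_left_comm q, ← mul_add,
      ENNReal.mul_tsub_add_mul_tsub hp hq (measure_ne_top _ _) (measure_ne_top _ _) hqp.le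
        (hab s) (hba s), ← mul_assoc, ENNReal.inv_mul_cancel hr0 hr_top, one_mul]
  refine ⟨r⁻¹ • (p • m₀ - q • m₁), r⁻¹ • (p • m₁ - q • m₀), ⟨?_⟩, ⟨?_⟩,
    h_solve hm₀ hm₁ h₁₀ h₀₁, h_solve hm₁ hm₀ h₀₁ h₁₀⟩
  · rw [h_apply hm₁ h₁₀ _ MeasurableSet.univ, hm₀, hm₁, ← ENNReal.sub_mul fun _ _ ↦ hpq_top,
      ENNReal.inv_mul_cancel hr0 hr_top]
  · rw [h_apply hm₀ h₀₁ _ MeasurableSet.univ, hm₀, hm₁, ← ENNReal.sub_mul fun _ _ ↦ hpq_top,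
      ENNReal.inv_mul_cancel hr0 hr_top]

lemma exists_isProbabilityMeasure_eq_smul_add_smul {p q : ℝ≥0∞} (hp : p ≠ ∞) (hqp : q ≤ p)
    (hpq : p + q ≠ 0) {m₀ m₁ : Measure Y} (hm₀ : m₀ Set.univ = p + q)
    (hm₁ : m₁ Set.univ = p + q) (h₁₀ : q • m₁ ≤ p • m₀) (h₀₁ : q • m₀ ≤ p • m₁) :
    ∃ P₀ P₁ : Measure Y, IsProbabilityMeasure P₀ ∧ IsProbabilityMeasure P₁ ∧
      m₀ = p • P₀ + q • P₁ ∧ m₁ = p • P₁ + q • P₀ := by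
  obtain rfl | hqp := hqp.eq_or_lt
  · have hq0 : q ≠ 0 := by rintro rfl; simp at hpq
    have hpq_top : q + q ≠ ∞ := ENNReal.add_ne_top.2 ⟨hp, hp⟩
    obtain rfl : m₀ = m₁ := Measure.ext fun s _ ↦ le_antisymm
      ((ENNReal.mul_le_mul_iff_right hq0 hp).1 (h₀₁ s))
      ((ENNReal.mul_le_mul_iff_right hq0 hp).1 (h₁₀ s))
    have hP : IsProbabilityMeasure ((q + q)⁻¹ • m₀) :=
      ⟨by rw [Measure.smul_apply, hm₀, smul_eq_mul, ENNReal.inv_mul_cancel hpq hpq_top]⟩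
    have hm₀_eq : m₀ = q • (q + q)⁻¹ • m₀ + q • (q + q)⁻¹ • m₀ := by
      rw [← add_smul, smul_smul, ENNReal.mul_inv_cancel hpq hpq_top, one_smul]
    exact ⟨_, _, hP, hP, hm₀_eq, hm₀_eq⟩
  · exact exists_isProbabilityMeasure_eq_smul_add_smul_of_lt hp hqp hm₀ hm₁ h₁₀ h₀₁

lemma Measure.add_bind {X : Type*} [MeasurableSpace X] {m₁ m₂ : Measure X} {f : X → Measure Y}
    (hf : Measurable f) : (m₁ + m₂).bind f = m₁.bind f + m₂.bind f := by
  ext s hs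
  simp only [Measure.bind_apply hs hf.aemeasurable, Measure.add_apply, lintegral_add_measure]

end MeasureTheory

noncomputable def rrKeep (ε δ : ℝ) : ℝ≥0∞ :=
  ENNReal.ofReal ((1 - δ) * Real.exp ε / (1 + Real.exp ε))

noncomputable def rrFlip (ε δ : ℝ) : ℝ≥0∞ :=
  ENNReal.ofReal ((1 - δ) / (1 + Real.exp ε))

lemma rrKeep_eq_mul_rrFlip (ε δ : ℝ) :
    rrKeep ε δ = ENNReal.ofReal (Real.exp ε) * rrFlip ε δ := by
  rw [rrKeep, rrFlip, ← ENNReal.ofReal_mul (Real.exp_pos ε).le]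
  congr 1
  ring

lemma rrKeep_add_rrFlip {ε δ : ℝ} (hδ0 : 0 ≤ δ) (hδ1 : δ ≤ 1) :
    rrKeep ε δ + rrFlip ε δ = 1 - ENNReal.ofReal δ := by
  have he : 0 < 1 + Real.exp ε := by positivity
  have h1δ : 0 ≤ 1 - δ := by linarith
  rw [rrKeep, rrFlip, ← ENNReal.ofReal_add (div_nonneg (mul_nonneg h1δ (Real.exp_pos ε).le) he.le)
    (div_nonneg h1δ he.le), ← ENNReal.ofReal_one, ← ENNReal.ofReal_sub _ hδ0]
  congr 1
  field_simp
  ring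

lemma rrLaw_bind {Y : Type*} [MeasurableSpace Y] (ε δ : ℝ) (b : Bool) (κ : Kernel RROut Y) :
    (rrLaw ε δ b).bind κ = rrKeep ε δ • κ (if b then RROut.one else RROut.zero)
      + rrFlip ε δ • κ (if b then RROut.zero else RROut.one)
      + ENNReal.ofReal δ • κ (if b then RROut.top else RROut.bot) := by
  simp only [rrLaw, rrKeep, rrFlip, Measure.add_bind κ.measurable, Measure.bind_smul,
    Measure.dirac_bind κ.measurable]

def rrKernel {Y : Type*} [MeasurableSpace Y] (P₀ P₁ Ptop Pbot : Measure Y) : Kernel RROut Y where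
  toFun
    | .zero => P₀
    | .one => P₁
    | .top => Ptop
    | .bot => Pbot
  measurable' := measurable_from_top

theorem reduction_to_randomized_response_general {Y : Type*} [MeasurableSpace Y]
    (μ ν : Measure Y) [IsProbabilityMeasure μ] [IsProbabilityMeasure ν]
    (ε δ : ℝ) (hε : 0 ≤ ε) (hδ0 : 0 ≤ δ) (hδ1 : δ < 1)
    (hdp₁ : ∀ G : Set Y, MeasurableSet G →
      μ G ≤ ENNReal.ofReal (Real.exp ε) * ν G + ENNReal.ofReal δ)
    (hdp₂ : ∀ G : Set Y, MeasurableSet G →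
      ν G ≤ ENNReal.ofReal (Real.exp ε) * μ G + ENNReal.ofReal δ) :
    ∃ κ : ProbabilityTheory.Kernel RROut Y, ProbabilityTheory.IsMarkovKernel κ ∧
      μ = (rrLaw ε δ false).bind κ ∧ ν = (rrLaw ε δ true).bind κ := by
  have hc : 1 ≤ ENNReal.ofReal (Real.exp ε) := ENNReal.one_le_ofReal.2 (Real.one_le_exp hε)
  have hδ : ENNReal.ofReal δ < 1 := ENNReal.ofReal_lt_one.2 hδ1
  have hp := rrKeep_eq_mul_rrFlip ε δ
  have hpq : rrKeep ε δ + rrFlip ε δ = 1 - ENNReal.ofReal δ := rrKeep_add_rrFlip hδ0 hδ1.le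
  obtain ⟨m₀, m₁, hm₀μ, hm₁ν, hm₁m₀, hm₀m₁, hm₀, hm₁⟩ :=
    exists_comparable_submeasures hc ENNReal.ofReal_ne_top hδ hdp₁ hdp₂
  obtain ⟨Pbot, _, hμ⟩ := exists_isProbabilityMeasure_eq_add_smul hm₀μ hδ.le hm₀
  obtain ⟨Ptop, _, hν⟩ := exists_isProbabilityMeasure_eq_add_smul hm₁ν hδ.le hm₁
  obtain ⟨P₀, P₁, _, _, h₀, h₁⟩ := exists_isProbabilityMeasure_eq_smul_add_smul
    (p := rrKeep ε δ) (q := rrFlip ε δ) ENNReal.ofReal_ne_top (hp ▸ le_mul_of_one_le_left' hc)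
    (hpq ▸ (tsub_pos_of_lt hδ).ne') (hm₀.trans hpq.symm) (hm₁.trans hpq.symm)
    (by rw [hp, mul_comm, ← smul_smul]; gcongr) (by rw [hp, mul_comm, ← smul_smul]; gcongr)
  refine ⟨rrKernel P₀ P₁ Ptop Pbot, ⟨by rintro (_ | _ | _ | _) <;> assumption⟩, ?_, ?_⟩
  · rw [rrLaw_bind, hμ, h₀]
    rfl
  · rw [rrLaw_bind, hν, h₁]
    rfl

/-- Reduction to randomized response (nonadaptive case, Kairouz–Oh–Viswanath): if `μ, ν`
are probability measures on a standard Borel space `Y` satisfying `(ε, δ)`-DP in both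
directions, then there is a Markov kernel `κ` from the four-point output space of
randomized response to `Y` such that `μ` and `ν` are the pushforwards of the laws of
`R(0)` and `R(1)` under `κ`. -/
theorem reduction_to_randomized_response {Y : Type*} [MeasurableSpace Y]
    [StandardBorelSpace Y] [Nonempty Y]
    (μ ν : Measure Y) [IsProbabilityMeasure μ] [IsProbabilityMeasure ν]
    (ε δ : ℝ) (hε : 0 ≤ ε) (hδ0 : 0 ≤ δ) (hδ1 : δ < 1)
    (hdp₁ : ∀ G : Set Y, MeasurableSet G →
      μ G ≤ ENNReal.ofReal (Real.exp ε) * ν G + ENNReal.ofReal δ)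
    (hdp₂ : ∀ G : Set Y, MeasurableSet G →
      ν G ≤ ENNReal.ofReal (Real.exp ε) * μ G + ENNReal.ofReal δ) :
    ∃ κ : ProbabilityTheory.Kernel RROut Y, ProbabilityTheory.IsMarkovKernel κ ∧
      μ = (rrLaw ε δ false).bind κ ∧ ν = (rrLaw ε δ true).bind κ :=
  reduction_to_randomized_response_general μ ν ε δ hε hδ0 hδ1 hdp₁ hdp₂
end
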